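/- arXiv:2207.07957 — 2 statements merged into one kernel-verified Lean document; each statement's English description precedes it below -/
import Mathlib

section
/- Let n be a positive integer and p a prime number with √(n+1) < p ≤ n + 1. Then the p-adic valuation of the integer σ_n/n! is 0 or 1, and it equals 1 if and only if there exists a positive integer k with k < √(n+1) + 1 such that p = ⌊n/k + 1⌋. -/
/-!
For `√(n+1) < p` we have `n < p²`, so Legendre's formula gives `v_p(n!) = ⌊n/p⌋` and the
valuation in question is `⌊n/(p-1)⌋ - ⌊n/p⌋`. Since `m := ⌊n/(p-1)⌋ ≤ p`, we get
`p(m-1) ≤ (p-1)m ≤ n`, so this difference is `0` or `1`. Moreover `⌊n/k⌋ = p - 1` exactly when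
`⌊n/p⌋ < k ≤ ⌊n/(p-1)⌋`; such a `k` exists iff the difference is `1`, and then
`k = ⌊n/p⌋ + 1 < √(n+1) + 1`.
-/

open Nat

/-- `σ n := ∏_{p prime} p ^ ⌊n / (p - 1)⌋` (only finitely many primes, those with
`p ≤ n + 1`, have a nonzero exponent; `n / (p - 1)` is natural division).
Since `n! ∣ σ n`, the quotient `σ n / n!` (natural division) is exact. -/
noncomputable def sigma' (n : ℕ) : ℕ := ∏ᶠ p ∈ {p : ℕ | p.Prime}, p ^ (n / (p - 1))

namespace Nat

theorem factorization_prod_pow_of_prime {s : Finset ℕ} (hs : ∀ q ∈ s, q.Prime) (e : ℕ → ℕ)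
    (p : ℕ) : (∏ q ∈ s, q ^ e q).factorization p = if p ∈ s then e p else 0 := by
  rw [factorization_prod fun q hq ↦ pow_ne_zero _ (hs q hq).ne_zero, Finset.sum_apply',
    Finset.sum_congr rfl fun q hq ↦ by rw [(hs q hq).factorization_pow, Finsupp.single_apply]]
  exact Finset.sum_ite_eq' s p e

theorem factorization_factorial_of_lt_sq {n p : ℕ} (hp : p.Prime) (h : n < p ^ 2) :
    (n !).factorization p = n / p := by
  rw [factorization_factorial hp (log_lt_of_lt_pow' two_ne_zero h)]
  simp

theorem div_sub_one_le_div_add_one {n p : ℕ} (h : n + 1 < p ^ 2) :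
    n / (p - 1) ≤ n / p + 1 := by
  obtain ⟨d, rfl⟩ : ∃ d, p = d + 1 := ⟨p - 1, by rcases p with _ | p <;> simp_all⟩
  rw [Nat.add_sub_cancel]
  have hm : n / d ≤ d + 1 := Nat.lt_add_one_iff.mp (Nat.div_lt_of_lt_mul (by nlinarith))
  have hmd : n / d * d ≤ n := Nat.div_mul_le_self n d
  suffices n / d - 1 ≤ n / (d + 1) by omega
  rw [Nat.le_div_iff_mul_le (by omega)]
  rcases hq : n / d with _ | m
  · simp
  · rw [hq] at hm hmd
    rw [Nat.add_sub_cancel]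
    nlinarith

theorem div_eq_sub_one_iff {n p k : ℕ} (hp : 1 < p) :
    n / k = p - 1 ↔ n / p < k ∧ k ≤ n / (p - 1) := by
  rcases k.eq_zero_or_pos with rfl | hk
  · simp only [Nat.div_zero, not_lt_zero, zero_le, and_true, iff_false]
    omega
  have hkp : (p - 1) * k + k = k * p := by
    rw [← Nat.succ_mul, Nat.succ_eq_add_one, Nat.sub_add_cancel hp.le, mul_comm]
  rw [Nat.div_eq_iff hk, Nat.div_lt_iff_lt_mul (by omega), Nat.le_div_iff_mul_le (by omega),
    hkp, mul_comm k (p - 1)]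
  omega

end Nat

theorem natCast_div_lt_sqrt_of_sqrt_lt {n p : ℕ} (h : √(n + 1 : ℝ) < p) :
    ((n / p : ℕ) : ℝ) < √(n + 1 : ℝ) := by
  by_contra! hle
  have hq : ((n / p : ℕ) : ℝ) * p ≤ n := by exact_mod_cast Nat.div_mul_le_self n p
  nlinarith [Real.sq_sqrt (show (0 : ℝ) ≤ n + 1 by positivity), Real.sqrt_nonneg (n + 1 : ℝ)]

theorem sigma'_eq_prod (n : ℕ) : sigma' n = ∏ q ∈ (n + 1).primesLE, q ^ (n / (q - 1)) := by
  refine finprod_mem_eq_prod_of_subset _ ?_ fun q hq ↦ (Nat.mem_primesLE.mp hq).2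
  rintro q ⟨hq, hne⟩
  refine Nat.mem_primesLE.mpr ⟨?_, hq⟩
  by_contra! hlt
  exact hne (by simp only [Nat.div_eq_of_lt (show n < q - 1 by omega), pow_zero])

theorem sigma'_ne_zero (n : ℕ) : sigma' n ≠ 0 := by
  rw [sigma'_eq_prod]
  exact Finset.prod_ne_zero_iff.mpr fun q hq ↦ pow_ne_zero _ (Nat.mem_primesLE.mp hq).2.ne_zero

theorem factorization_sigma' {n p : ℕ} (hp : p.Prime) :
    (sigma' n).factorization p = n / (p - 1) := by
  rw [sigma'_eq_prod, Nat.factorization_prod_pow_of_prime fun q hq ↦ (Nat.mem_primesLE.mp hq).2]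
  split_ifs with h
  · rfl
  · simp only [Nat.mem_primesLE, hp, and_true, not_le] at h
    exact (Nat.div_eq_of_lt (by omega)).symm

theorem factorial_dvd_sigma' (n : ℕ) : n ! ∣ sigma' n := by
  rw [← Nat.factorization_prime_le_iff_dvd (factorial_ne_zero n) (sigma'_ne_zero n)]
  intro q hq
  rw [factorization_sigma' hq]
  exact Nat.factorization_factorial_le_div_pred hq n

theorem factorization_sigma'_div_factorial {n p : ℕ} (hp : p.Prime) (h : n < p ^ 2) :
    (sigma' n / n !).factorization p = n / (p - 1) - n / p := by
  rw [Nat.factorization_div (factorial_dvd_sigma' n), Finsupp.coe_tsub, Pi.sub_apply,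
    factorization_sigma' hp, Nat.factorization_factorial_of_lt_sq hp h]

theorem padicValNat_sigma_div_factorial_general (n : ℕ) (p : ℕ) (hp : p.Prime)
    (h1 : Real.sqrt (n + 1) < p) :
    (padicValNat p (sigma' n / n !) = 0 ∨ padicValNat p (sigma' n / n !) = 1) ∧
      (padicValNat p (sigma' n / n !) = 1 ↔
        ∃ k : ℕ, 0 < k ∧ (k : ℝ) < Real.sqrt (n + 1) + 1 ∧ p = n / k + 1) := by
  have hsq : n + 1 < p ^ 2 := by
    exact_mod_cast (Real.sqrt_lt' (by exact_mod_cast hp.pos)).mp h1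
  rw [← Nat.factorization_def _ hp, factorization_sigma'_div_factorial hp (by omega)]
  have hle := Nat.div_sub_one_le_div_add_one hsq
  have hge : n / p ≤ n / (p - 1) :=
    Nat.div_le_div_left (Nat.sub_le p 1) (Nat.sub_pos_of_lt hp.one_lt)
  have hp2 := hp.two_le
  refine ⟨by omega, fun h ↦ ?_, ?_⟩
  · refine ⟨n / p + 1, Nat.succ_pos _, ?_, ?_⟩
    · push_cast
      linarith [natCast_div_lt_sqrt_of_sqrt_lt h1]
    · have := (Nat.div_eq_sub_one_iff hp.one_lt).mpr ⟨lt_add_one (n / p), by omega⟩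
      omega
  · rintro ⟨k, -, -, hk⟩
    have := (Nat.div_eq_sub_one_iff hp.one_lt).mp (by omega : n / k = p - 1)
    omega

/-- **Theorem 2.** Let `n` be a positive integer and `p` a prime with
`√(n+1) < p ≤ n + 1`. Then the `p`-adic valuation of `σ n / n!` is `0` or `1`, and it
equals `1` if and only if `p = ⌊n / k + 1⌋` for some positive integer `k` with
`k < √(n+1) + 1` (here `⌊n / k + 1⌋ = n / k + 1` with natural division). -/
theorem padicValNat_sigma_div_factorial (n : ℕ) (hn : 0 < n) (p : ℕ) (hp : p.Prime)
    (h1 : Real.sqrt (n + 1) < p) (h2 : p ≤ n + 1) :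
    (padicValNat p (sigma' n / n !) = 0 ∨ padicValNat p (sigma' n / n !) = 1) ∧
      (padicValNat p (sigma' n / n !) = 1 ↔
        ∃ k : ℕ, 0 < k ∧ (k : ℝ) < Real.sqrt (n + 1) + 1 ∧ p = n / k + 1) :=
  padicValNat_sigma_div_factorial_general n p hp h1
end

section
/- Let c := ∑_{p prime} (log p)/(p(p−1)). Then log ρ_n = n·log n − (c + 1)·n + O(√n); that is, there is a constant M > 0 such that for all positive integers n, |log ρ_n − n·log n + (c + 1)·n| ≤ M·√n. -/
/-!
Legendre's formula `v_p(n!) = ∑_{k ≥ 1} ⌊n / p^k⌋` gives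
`log n! - log ρ_n = ∑_p log p ∑_{k ≥ 2} ⌊n / p^k⌋`, where only the primes `p ≤ √n` contribute.
Since `∑_{k ≥ 2} n / p^k = n / (p (p - 1))`, the error `log ρ_n - n log n + (c + 1) n` splits
into three nonnegative parts:
* the Stirling error `log n! - (n log n - n) = O(log n)`;
* `∑_{p ≤ √n} log p` times a sum of fractional parts plus a geometric tail, which is at most
  `∑_{p ≤ √n} (log_p n + 1) log p ≤ ψ(n) - θ(n) + 2 θ(√n) = O(√n)`;
* `n ∑_{p > √n} log p / (p (p - 1)) = O(√n)`, by Chebyshev's bound `θ(x) ≤ x log 4` applied on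
  dyadic blocks.
-/

/-- `ρ n := ∏_{p prime} p ^ ⌊n / p⌋` (only finitely many primes, those with `p ≤ n`,
have a nonzero exponent; `n / p` is natural division, i.e. `⌊n / p⌋`). -/
noncomputable def rho (n : ℕ) : ℕ := ∏ᶠ p ∈ {p : ℕ | p.Prime}, p ^ (n / p)

/-- The constant `c := ∑_{p prime} (log p) / (p (p - 1))` (a convergent series). -/
noncomputable def cconst : ℝ :=
  ∑' p : {p : ℕ // p.Prime}, Real.log (p : ℕ) / (((p : ℕ) : ℝ) * (((p : ℕ) : ℝ) - 1))

open Finset Real Chebyshev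
open scoped Nat

noncomputable def cconstTerm (p : ℕ) : ℝ :=
  if p.Prime then log p / (p * (p - 1)) else 0

theorem cconst_eq_tsum_cconstTerm : cconst = ∑' p, cconstTerm p := by
  refine (tsum_subtype {p : ℕ | p.Prime} fun p : ℕ ↦ log p / (p * (p - 1))).trans
    (tsum_congr fun p ↦ ?_)
  simp [Set.indicator_apply, cconstTerm]

theorem cconstTerm_nonneg (p : ℕ) : 0 ≤ cconstTerm p := by
  unfold cconstTerm
  split_ifs with hp
  · have : (2 : ℝ) ≤ p := mod_cast hp.two_le
    exact div_nonneg (log_nonneg (by linarith)) (by nlinarith)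
  · rfl

theorem cconstTerm_le {k p : ℕ} (hk : 0 < k) (hkp : k ≤ p) :
    cconstTerm p ≤ 2 / k ^ 2 * if p.Prime then log p else 0 := by
  unfold cconstTerm
  split_ifs with hp
  · have hp2 : (2 : ℝ) ≤ p := mod_cast hp.two_le
    have hkp' : (k : ℝ) ≤ p := mod_cast hkp
    have hk' : (0 : ℝ) < k := mod_cast hk
    rw [div_mul_eq_mul_div, div_le_div_iff₀ (by nlinarith) (by positivity)]
    have := log_nonneg (by linarith : (1 : ℝ) ≤ p)
    have : (k : ℝ) ^ 2 ≤ 2 * (p * (p - 1)) := by nlinarith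
    nlinarith
  · simp

theorem sum_Ico_cconstTerm_le_of_le_two_mul {k N : ℕ} (hk : 0 < k) (hN : N ≤ 2 * k) :
    ∑ p ∈ Ico k N, cconstTerm p ≤ 4 * log 4 / k := by
  have hk' : (0 : ℝ) < k := mod_cast hk
  have hθ : ∑ p ∈ Ico k N with p.Prime, log p ≤ θ N := by
    rw [theta_eq_sum_primesLE_log]
    refine sum_le_sum_of_subset_of_nonneg (fun p hp ↦ ?_) fun p _ _ ↦ log_natCast_nonneg p
    simp only [mem_filter, mem_Ico] at hp
    exact Nat.mem_primesLE.mpr ⟨hp.1.2.le, hp.2⟩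
  calc ∑ p ∈ Ico k N, cconstTerm p
      ≤ ∑ p ∈ Ico k N, 2 / k ^ 2 * if p.Prime then log p else 0 :=
        sum_le_sum fun p hp ↦ cconstTerm_le hk (mem_Ico.mp hp).1
    _ = 2 / k ^ 2 * ∑ p ∈ Ico k N with p.Prime, log p := by rw [← mul_sum, sum_filter]
    _ ≤ 2 / k ^ 2 * (log 4 * (2 * k)) := by
        gcongr
        exact hθ.trans (theta_le_log4_mul_x (Nat.cast_nonneg N) |>.trans
          (by gcongr; exact_mod_cast hN))
    _ = 4 * log 4 / k := by field_simp; ring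

theorem sum_Ico_cconstTerm_le {k : ℕ} (hk : 0 < k) (N : ℕ) :
    ∑ p ∈ Ico k N, cconstTerm p ≤ 8 * log 4 / k := by
  have hlog4 : 0 ≤ log 4 := log_nonneg (by norm_num)
  by_cases hN : N ≤ 2 * k
  · exact (sum_Ico_cconstTerm_le_of_le_two_mul hk hN).trans (by gcongr; norm_num)
  · rw [← sum_Ico_consecutive _ (by omega : k ≤ 2 * k) (by omega : 2 * k ≤ N)]
    have hfirst := sum_Ico_cconstTerm_le_of_le_two_mul hk le_rfl
    have hrest := sum_Ico_cconstTerm_le (by omega : 0 < 2 * k) N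
    push_cast at hrest
    calc _ ≤ 4 * log 4 / k + 8 * log 4 / (2 * k) := add_le_add hfirst hrest
      _ = 8 * log 4 / k := by field_simp; ring
termination_by N - k

theorem sum_range_cconstTerm_add_le {k : ℕ} (hk : 0 < k) (N : ℕ) :
    ∑ i ∈ range N, cconstTerm (i + k) ≤ 8 * log 4 / k := by
  simpa [sum_Ico_eq_sum_range, add_comm] using sum_Ico_cconstTerm_le hk (N + k)

theorem summable_cconstTerm : Summable cconstTerm :=
  (summable_nat_add_iff 1).mp <|
    summable_of_sum_range_le (fun _ ↦ cconstTerm_nonneg _) (sum_range_cconstTerm_add_le one_pos)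

theorem tsum_cconstTerm_add_le {k : ℕ} (hk : 0 < k) :
    ∑' i, cconstTerm (i + k) ≤ 8 * log 4 / k :=
  Real.tsum_le_of_sum_range_le (fun _ ↦ cconstTerm_nonneg _) (sum_range_cconstTerm_add_le hk)

theorem rho_eq_prod_primesLE (n : ℕ) : rho n = ∏ p ∈ Nat.primesLE n, p ^ (n / p) := by
  refine finprod_mem_eq_prod_of_subset _ ?_ fun p hp ↦ Nat.prime_of_mem_primesLE hp
  rintro p ⟨hp, hne⟩
  refine Nat.mem_primesLE.mpr ⟨?_, hp⟩
  by_contra! hnp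
  simp [Nat.div_eq_of_lt hnp] at hne

def legendreTail (p n : ℕ) : ℕ := ∑ k ∈ Ico 2 (Nat.log p n + 1), n / p ^ k

theorem factorization_factorial_eq_div_add_legendreTail {p n : ℕ} (hp : p.Prime) :
    (n !).factorization p = n / p + legendreTail p n := by
  rw [Nat.factorization_factorial hp (Nat.lt_succ_self _), legendreTail]
  rcases Nat.lt_or_ge n p with hnp | hpn
  · simp [Nat.log_of_lt hnp, Nat.div_eq_of_lt hnp]
  · rw [← sum_Ico_consecutive _ (by omega : 1 ≤ 2)
      (by have := Nat.log_pos hp.one_lt hpn; omega : 2 ≤ Nat.log p n + 1)]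
    simp

theorem legendreTail_eq_zero_of_lt_sq {p n : ℕ} (h : n < p ^ 2) : legendreTail p n = 0 := by
  rcases eq_or_ne n 0 with rfl | hn
  · simp [legendreTail]
  · rw [legendreTail, Ico_eq_empty (by have := Nat.log_lt_of_lt_pow hn h; omega), sum_empty]

theorem log_nat_eq_sum_primesLE {m n : ℕ} (hmn : ∀ p, p.Prime → p ∣ m → p ≤ n) :
    log m = ∑ p ∈ Nat.primesLE n, m.factorization p * log p := by
  rw [log_nat_eq_sum_factorization]
  refine Finsupp.sum_of_support_subset _ (fun p hp ↦ ?_) _ (fun _ _ ↦ by simp)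
  obtain ⟨hpp, hpm, -⟩ := Nat.mem_primeFactors.mp (Nat.support_factorization m ▸ hp)
  exact Nat.mem_primesLE.mpr ⟨hmn p hpp hpm, hpp⟩

theorem log_factorial_sub_log_rho (n : ℕ) :
    log n ! - log (rho n) = ∑ p ∈ Nat.primesLE n.sqrt, legendreTail p n * log p := by
  have hρ : log (rho n) = ∑ p ∈ Nat.primesLE n, (n / p : ℕ) * log p := by
    rw [rho_eq_prod_primesLE, Nat.cast_prod, log_prod fun p hp ↦
      by exact_mod_cast (pow_pos (Nat.prime_of_mem_primesLE hp).pos _).ne']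
    simp [log_pow]
  rw [log_nat_eq_sum_primesLE fun p hp ↦ (hp.dvd_factorial).mp, hρ, ← sum_sub_distrib]
  have hterm : ∀ p ∈ Nat.primesLE n,
      ((n !).factorization p : ℝ) * log p - (n / p : ℕ) * log p = legendreTail p n * log p := by
    intro p hp
    rw [factorization_factorial_eq_div_add_legendreTail (Nat.prime_of_mem_primesLE hp)]
    push_cast
    ring
  rw [sum_congr rfl hterm]
  refine (sum_subset (Nat.primesLE_mono n.sqrt_le_self) fun p hp hpn ↦ ?_).symm
  have hsq : n.sqrt < p := by
    by_contra! h
    exact hpn (Nat.mem_primesLE.mpr ⟨h, Nat.prime_of_mem_primesLE hp⟩)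
  simp [legendreTail_eq_zero_of_lt_sq (Nat.sqrt_lt'.mp hsq)]

theorem sum_Ico_two_inv_pow_add_inv {x : ℝ} (hx : 1 < x) {L : ℕ} (hL : 1 ≤ L) :
    ∑ k ∈ Ico 2 (L + 1), (x ^ k)⁻¹ + (x ^ L * (x - 1))⁻¹ = (x * (x - 1))⁻¹ := by
  induction L, hL using Nat.le_induction with
  | base => simp
  | succ L hL ih =>
    have : x - 1 ≠ 0 := sub_ne_zero.mpr hx.ne'
    rw [sum_Ico_succ_top (by omega), ← ih]
    field_simp
    ring

noncomputable def legendreError (p n : ℕ) : ℝ := n / (p * (p - 1)) - legendreTail p n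

theorem legendreError_eq {p n : ℕ} (hp : 2 ≤ p) (hpn : p ≤ n) :
    legendreError p n = ∑ k ∈ Ico 2 (Nat.log p n + 1), ((n : ℝ) / p ^ k - (n / p ^ k : ℕ)) +
      n / (p ^ Nat.log p n * (p - 1)) := by
  have hp' : (1 : ℝ) < p := mod_cast hp
  have hgeom := congr_arg ((n : ℝ) * ·)
    (sum_Ico_two_inv_pow_add_inv hp' (Nat.log_pos hp hpn))
  simp only [mul_add, mul_sum, ← div_eq_mul_inv] at hgeom
  rw [legendreError, legendreTail, sum_sub_distrib, ← hgeom]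
  push_cast
  ring

theorem legendreError_nonneg {p n : ℕ} (hp : 2 ≤ p) (hpn : p ≤ n) : 0 ≤ legendreError p n := by
  rw [legendreError_eq hp hpn]
  have hp' : (1 : ℝ) < p := mod_cast hp
  refine add_nonneg (sum_nonneg fun k _ ↦ ?_) (div_nonneg (Nat.cast_nonneg n)
    (mul_nonneg (by positivity) (by linarith)))
  exact sub_nonneg.mpr (by exact_mod_cast Nat.cast_div_le)

theorem legendreError_le {p n : ℕ} (hp : 2 ≤ p) (hpn : p ≤ n) :
    legendreError p n ≤ Nat.log p n + 1 := by
  set L := Nat.log p n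
  have hL : 1 ≤ L := Nat.log_pos hp hpn
  have hp' : (2 : ℝ) ≤ p := mod_cast hp
  have hfrac : ∀ k ∈ Ico 2 (L + 1), (n : ℝ) / p ^ k - (n / p ^ k : ℕ) ≤ 1 := fun k _ ↦ by
    have := Nat.lt_floor_add_one ((n : ℝ) / (p ^ k : ℕ))
    rw [Nat.floor_div_eq_div] at this
    push_cast at this
    linarith
  have hlast : (n : ℝ) / (p ^ L * (p - 1)) ≤ 2 := by
    have hn : (n : ℝ) < p ^ (L + 1) := mod_cast Nat.lt_pow_succ_log_self hp n
    have hpL : (0 : ℝ) < p ^ L := by positivity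
    rw [div_le_iff₀ (by nlinarith)]
    rw [pow_succ] at hn
    nlinarith
  calc legendreError p n
      ≤ ∑ k ∈ Ico 2 (L + 1), (1 : ℝ) + 2 := by
        rw [legendreError_eq hp hpn]
        exact add_le_add (sum_le_sum hfrac) hlast
    _ = L + 1 := by
        rw [sum_const, Nat.card_Ico, nsmul_one, Nat.cast_sub (by omega)]
        push_cast
        ring

theorem psi_sub_theta_eq_sum_primesLE (n : ℕ) :
    ψ n - θ n = ∑ p ∈ Nat.primesLE n, ((Nat.log p n : ℝ) - 1) * log p := by
  simp only [psi_eq_sum_mul_log_prime, theta_eq_sum_primesLE_log, ← sum_sub_distrib, sub_one_mul]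

theorem sum_log_mul_legendreError_le (n : ℕ) :
    ∑ p ∈ Nat.primesLE n.sqrt, log p * legendreError p n ≤ ψ n - θ n + 2 * θ n.sqrt := by
  have hlog : ∀ {p}, p ∈ Nat.primesLE n → 1 ≤ Nat.log p n := fun hp ↦
    Nat.log_pos (Nat.one_lt_of_mem_primesLE hp) (Nat.le_of_mem_primesLE hp)
  rw [psi_sub_theta_eq_sum_primesLE, theta_eq_sum_primesLE_log, mul_sum]
  calc ∑ p ∈ Nat.primesLE n.sqrt, log p * legendreError p n
      ≤ ∑ p ∈ Nat.primesLE n.sqrt, (((Nat.log p n : ℝ) - 1) * log p + 2 * log p) := by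
        refine sum_le_sum fun p hp ↦ ?_
        have := legendreError_le (Nat.two_le_of_mem_primesLE hp)
          ((Nat.le_of_mem_primesLE hp).trans n.sqrt_le_self)
        nlinarith [log_natCast_nonneg p]
    _ ≤ ∑ p ∈ Nat.primesLE n, ((Nat.log p n : ℝ) - 1) * log p +
          ∑ p ∈ Nat.primesLE n.sqrt, 2 * log p := by
        rw [sum_add_distrib]
        refine add_le_add_left (sum_le_sum_of_subset_of_nonneg
          (Nat.primesLE_mono n.sqrt_le_self) fun p hp _ ↦ ?_) _
        exact mul_nonneg (sub_nonneg.mpr (by exact_mod_cast hlog hp)) (log_natCast_nonneg p)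

theorem log_factorial_sub_stirling_bounds {n : ℕ} (hn : n ≠ 0) :
    0 ≤ log n ! - (n * log n - n) ∧ log n ! - (n * log n - n) ≤ 1 + log n / 2 := by
  have hn' : (0 : ℝ) < n := mod_cast Nat.pos_of_ne_zero hn
  constructor
  · have := Stirling.le_log_factorial_stirling hn
    have := log_nonneg (by nlinarith [pi_gt_three] : (1 : ℝ) ≤ 2 * π)
    have := log_natCast_nonneg n
    linarith
  · obtain ⟨k, rfl⟩ := Nat.exists_eq_succ_of_ne_zero hn
    have hlog := log_le_log (Stirling.stirlingSeq'_pos k)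
      (Stirling.stirlingSeq'_antitone (Nat.zero_le k))
    simp only [Function.comp_apply, Nat.succ_eq_add_one, zero_add] at hlog
    rw [Stirling.log_stirlingSeq_formula, Stirling.stirlingSeq_one,
      log_div (exp_pos 1).ne' (by positivity), log_exp, log_sqrt zero_le_two,
      log_mul two_ne_zero hn'.ne', log_div hn'.ne' (exp_pos 1).ne', log_exp] at hlog
    linarith

theorem log_rho_sub_mul_log_add_eq (n : ℕ) :
    log (rho n) - n * log n + (cconst + 1) * n =
      (log n ! - (n * log n - n)) + ∑ p ∈ Nat.primesLE n.sqrt, log p * legendreError p n +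
        n * ∑' i, cconstTerm (i + (n.sqrt + 1)) := by
  have hc : cconst = ∑ p ∈ Nat.primesLE n.sqrt, log p / (p * (p - 1)) +
      ∑' i, cconstTerm (i + (n.sqrt + 1)) := by
    rw [cconst_eq_tsum_cconstTerm, ← summable_cconstTerm.sum_add_tsum_nat_add,
      Nat.primesLE_eq_filter_range, sum_filter]
    rfl
  have herr : ∑ p ∈ Nat.primesLE n.sqrt, log p * legendreError p n =
      n * ∑ p ∈ Nat.primesLE n.sqrt, log p / (p * (p - 1)) -
        ∑ p ∈ Nat.primesLE n.sqrt, legendreTail p n * log p := by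
    rw [mul_sum, ← sum_sub_distrib]
    refine sum_congr rfl fun p _ ↦ ?_
    rw [legendreError]
    ring
  rw [herr, hc, ← log_factorial_sub_log_rho]
  ring

theorem natCast_mul_tsum_cconstTerm_sqrt_le (n : ℕ) :
    n * ∑' i, cconstTerm (i + (n.sqrt + 1)) ≤ 8 * log 4 * √n := by
  have hm : (0 : ℝ) < n.sqrt + 1 := by positivity
  have hn : (n : ℝ) ≤ √n * (n.sqrt + 1) := by
    calc (n : ℝ) = √n * √n := (mul_self_sqrt (Nat.cast_nonneg n)).symm
      _ ≤ √n * (n.sqrt + 1) := by gcongr; exact Real.real_sqrt_lt_nat_sqrt_succ.le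
  calc n * ∑' i, cconstTerm (i + (n.sqrt + 1))
      ≤ n * (8 * log 4 / (n.sqrt + 1)) := by
        gcongr
        exact_mod_cast tsum_cconstTerm_add_le n.sqrt.succ_pos
    _ ≤ 8 * log 4 * √n := by
        rw [mul_div_assoc', div_le_iff₀ hm]
        have : 0 ≤ 8 * log 4 := by positivity
        nlinarith

/-- **Theorem 3.** With `c := ∑_{p prime} (log p)/(p(p-1))`, we have
`log ρ n = n log n − (c + 1) n + O(√n)`: there is `M > 0` such that for every positive
integer `n`, `|log ρ n − n log n + (c + 1) n| ≤ M √n`. -/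
theorem log_rho_estimate :
    ∃ M : ℝ, 0 < M ∧ ∀ n : ℕ, 0 < n →
      |Real.log (rho n) - n * Real.log n + (cconst + 1) * n| ≤ M * Real.sqrt n := by
  obtain ⟨C, hC⟩ := psi_sub_theta_le_mul_sqrt
  refine ⟨2 + |C| + 10 * log 4, by positivity, fun n hn ↦ ?_⟩
  have hsqrt : 1 ≤ √n := one_le_sqrt.mpr (by exact_mod_cast hn)
  obtain ⟨hA₀, hA⟩ := log_factorial_sub_stirling_bounds hn.ne'
  have hlog : log n / 2 ≤ √n := log_sqrt (Nat.cast_nonneg n) ▸ log_le_self (sqrt_nonneg _)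
  have hB₀ : 0 ≤ ∑ p ∈ Nat.primesLE n.sqrt, log p * legendreError p n :=
    sum_nonneg fun p hp ↦ mul_nonneg (log_natCast_nonneg p) (legendreError_nonneg
      (Nat.two_le_of_mem_primesLE hp) ((Nat.le_of_mem_primesLE hp).trans n.sqrt_le_self))
  have hθ : θ n.sqrt ≤ log 4 * √n :=
    (theta_le_log4_mul_x (Nat.cast_nonneg _)).trans (by gcongr; exact Real.nat_sqrt_le_real_sqrt)
  have hB := sum_log_mul_legendreError_le n
  have hT₀ : 0 ≤ (n : ℝ) * ∑' i, cconstTerm (i + (n.sqrt + 1)) :=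
    mul_nonneg (Nat.cast_nonneg n) (tsum_nonneg fun _ ↦ cconstTerm_nonneg _)
  have hT := natCast_mul_tsum_cconstTerm_sqrt_le n
  have hCabs : C * √n ≤ |C| * √n := by gcongr; exact le_abs_self C
  rw [log_rho_sub_mul_log_add_eq, abs_of_nonneg (by linarith)]
  linarith [hC n]
end
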